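/- arXiv:2304.06313 — 3 statements merged into one kernel-verified Lean document; each statement's English description precedes it below -/
import Mathlib

section
/- For every real number α with 0 < α < 1/2, the numbers p₀ = (α − 2α²)/(α(2α³ − 4α² + 1)), p₀′ = (1 − α)(α − 2α²)/(2α³ − 4α² + 1) and p_k = (α/(1 − α))^{k−1}·(α − 2α²)/(2α³ − 4α² + 1) for k ≥ 1 satisfy the stationarity (balance) equations of the selfish-mining Markov chain: p₁ = α·p₀, p₀′ = (1 − α)·p₁, p₀ = (1 − α)·p₀ + p₀′ + (1 − α)·p₂, and p_k = α·p_{k−1} + (1 − α)·p_{k+1} for every k ≥ 2. -/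
/-!
The chain is a birth–death chain on the states `1, 2, …`, so it suffices to check the cut
equations `(1 - α) p_{k+1} = α p_k` for `k ≥ 1`: the geometric ratio `α / (1 - α)` is exactly
what makes them hold, and subtracting two consecutive cuts gives the balance at every `k ≥ 2`.
The balance at state `0` is then the sum of the balances at `1`, `0′` and the cut between
`1` and `2`, so only `p₁ = α p₀` and `p₀′ = (1 - α) p₁` need to be checked by hand.
-/

theorem cut_of_geometric {α c : ℝ} (hα : α ≠ 1) {p : ℕ → ℝ}
    (hp : ∀ k, 1 ≤ k → p k = (α / (1 - α)) ^ (k - 1) * c) (k : ℕ) (hk : 1 ≤ k) :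
    (1 - α) * p (k + 1) = α * p k := by
  have h1α : 1 - α ≠ 0 := sub_ne_zero.mpr hα.symm
  rw [hp (k + 1) (by omega), hp k hk, show k + 1 - 1 = k - 1 + 1 by omega, pow_succ]
  field_simp

theorem balance_of_cut {α : ℝ} {p : ℕ → ℝ}
    (hcut : ∀ k, 1 ≤ k → (1 - α) * p (k + 1) = α * p k) (k : ℕ) (hk : 2 ≤ k) :
    p k = α * p (k - 1) + (1 - α) * p (k + 1) := by
  obtain ⟨j, rfl⟩ : ∃ j, k = j + 1 := ⟨k - 1, by omega⟩
  rw [Nat.add_sub_cancel]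
  linear_combination hcut j (by omega) - hcut (j + 1) (by omega)

/-- For `0 < α < 1/2`, the numbers `p₀ = (α − 2α²)/(α(2α³ − 4α² + 1))`,
`p₀′ = (1 − α)(α − 2α²)/(2α³ − 4α² + 1)` and
`p_k = (α/(1−α))^{k−1}·(α − 2α²)/(2α³ − 4α² + 1)` for `k ≥ 1` satisfy the balance
equations of the Eyal–Sirer selfish-mining Markov chain:
`p₁ = α·p₀`, `p₀′ = (1 − α)·p₁`, `p₀ = (1 − α)·p₀ + p₀′ + (1 − α)·p₂`, and
`p_k = α·p_{k−1} + (1 − α)·p_{k+1}` for every `k ≥ 2`. -/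
theorem stationary_balance_equations (α : ℝ) (h0 : 0 < α) (h1 : α < 1/2)
    (p0 p0' : ℝ) (p : ℕ → ℝ)
    (hp0 : p0 = (α - 2 * α ^ 2) / (α * (2 * α ^ 3 - 4 * α ^ 2 + 1)))
    (hp0' : p0' = (1 - α) * (α - 2 * α ^ 2) / (2 * α ^ 3 - 4 * α ^ 2 + 1))
    (hp : ∀ k : ℕ, 1 ≤ k →
      p k = (α / (1 - α)) ^ (k - 1) * (α - 2 * α ^ 2) / (2 * α ^ 3 - 4 * α ^ 2 + 1)) :
    p 1 = α * p0 ∧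
    p0' = (1 - α) * p 1 ∧
    p0 = (1 - α) * p0 + p0' + (1 - α) * p 2 ∧
    ∀ k : ℕ, 2 ≤ k → p k = α * p (k - 1) + (1 - α) * p (k + 1) := by
  have hα0 : α ≠ 0 := h0.ne'
  have hD : 2 * α ^ 3 - 4 * α ^ 2 + 1 ≠ 0 := by nlinarith
  have hgeom : ∀ k, 1 ≤ k → p k =
      (α / (1 - α)) ^ (k - 1) * ((α - 2 * α ^ 2) / (2 * α ^ 3 - 4 * α ^ 2 + 1)) :=
    fun k hk => by rw [hp k hk, mul_div_assoc]
  have hcut := cut_of_geometric (by linarith : α < 1).ne hgeom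
  have hp1 : p 1 = (α - 2 * α ^ 2) / (2 * α ^ 3 - 4 * α ^ 2 + 1) := by
    simpa using hgeom 1 le_rfl
  have hstate1 : p 1 = α * p0 := by rw [hp1, hp0]; field_simp
  have hstate0' : p0' = (1 - α) * p 1 := by rw [hp0', hp1]; ring
  exact ⟨hstate1, hstate0', by linear_combination -hstate1 - hstate0' - hcut 1 le_rfl,
    balance_of_cut hcut⟩
end

section
/- For every real number α with 0 < α < 1/2, the progress rate R(α) = 1 − α(1 − α)²/(2α³ − 4α² + 1) satisfies 1/2 < R(α) < 1. In particular the presence of a selfish-mining pool of any relative size α ∈ (0, 1/2) strictly slows down the growth of the main branch (R(α) < 1) but never slows it below half speed. -/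
theorem one_sub_div_two_mul_add_mem_Ioo {N ε : ℝ} (hN : 0 < N) (hε : 0 < ε) :
    1 - N / (2 * N + ε) ∈ Set.Ioo (1 / 2) 1 := by
  have hD : 0 < 2 * N + ε := by positivity
  have hlt : N / (2 * N + ε) < 1 / 2 := (div_lt_iff₀ hD).mpr (by linarith)
  have hpos : 0 < N / (2 * N + ε) := div_pos hN hD
  constructor <;> linarith

/-- For every `α` with `0 < α < 1/2`, the progress rate
`R(α) = 1 − α(1 − α)²/(2α³ − 4α² + 1)` of the main branch in the presence of a
selfish-mining pool of relative power `α` satisfies `1/2 < R(α) < 1`. -/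
theorem progress_rate_bounds (α : ℝ) (h0 : 0 < α) (h1 : α < 1/2) :
    1/2 < 1 - α * (1 - α) ^ 2 / (2 * α ^ 3 - 4 * α ^ 2 + 1) ∧
    1 - α * (1 - α) ^ 2 / (2 * α ^ 3 - 4 * α ^ 2 + 1) < 1 := by
  have hN : 0 < α * (1 - α) ^ 2 := mul_pos h0 (pow_pos (by linarith) 2)
  have hsplit : 2 * α ^ 3 - 4 * α ^ 2 + 1 = 2 * (α * (1 - α) ^ 2) + (1 - 2 * α) := by ring
  rw [hsplit]
  exact one_sub_div_two_mul_add_mem_Ioo hN (by linarith)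
end

section
/- The function R(α) = 1 − α(1 − α)²/(2α³ − 4α² + 1) is strictly decreasing on the interval (0, 1/2): for all real α₁, α₂ with 0 < α₁ < α₂ < 1/2 one has R(α₂) < R(α₁). Equivalently, the slowdown 1 − R(α) caused by a selfish pool strictly increases with the pool's relative size α. -/
/-!
Writing the slowdown `1 - R` as `g / h` with `g α = α (1 - α)²` and `h α = 2α³ - 4α² + 1`, the
cross difference `g b h a - g a h b` factors as `(b - a) ((1 - a - b)² + a b (3 - 2(a + b)))`,
whose second factor is positive for `0 ≤ a < b ≤ 1/2`.
-/

open Set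

noncomputable def slowdown (α : ℝ) : ℝ :=
  α * (1 - α) ^ 2 / (2 * α ^ 3 - 4 * α ^ 2 + 1)

lemma slowdown_denom_pos {α : ℝ} (h0 : 0 ≤ α) (h1 : α ≤ 1 / 2) :
    0 < 2 * α ^ 3 - 4 * α ^ 2 + 1 := by
  nlinarith [mul_nonneg (mul_nonneg h0 h0) (sub_nonneg.2 h1)]

lemma slowdown_cross_sub (a b : ℝ) :
    b * (1 - b) ^ 2 * (2 * a ^ 3 - 4 * a ^ 2 + 1) - a * (1 - a) ^ 2 * (2 * b ^ 3 - 4 * b ^ 2 + 1)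
      = (b - a) * ((1 - a - b) ^ 2 + a * b * (3 - 2 * (a + b))) := by
  ring

lemma slowdown_cross_factor_pos {a b : ℝ} (ha : 0 ≤ a) (hab : a < b) (hb : b ≤ 1 / 2) :
    0 < (1 - a - b) ^ 2 + a * b * (3 - 2 * (a + b)) := by
  rcases ha.eq_or_lt with rfl | ha
  · nlinarith
  · have : 0 < a * b * (3 - 2 * (a + b)) :=
      mul_pos (mul_pos ha (ha.trans hab)) (by linarith)
    positivity

theorem slowdown_strictMonoOn : StrictMonoOn slowdown (Icc 0 (1 / 2)) := by
  rintro a ⟨ha, -⟩ b ⟨-, hb⟩ hab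
  rw [slowdown, slowdown, div_lt_div_iff₀ (slowdown_denom_pos ha (by linarith))
    (slowdown_denom_pos (by linarith) hb), ← sub_pos, slowdown_cross_sub]
  exact mul_pos (sub_pos.2 hab) (slowdown_cross_factor_pos ha hab hb)

/-- The progress rate `R(α) = 1 − α(1 − α)²/(2α³ − 4α² + 1)` is strictly
decreasing on `(0, 1/2)`: for all `0 < α₁ < α₂ < 1/2` one has `R(α₂) < R(α₁)`. -/
theorem progress_rate_strict_anti (α₁ α₂ : ℝ)
    (h0 : 0 < α₁) (h12 : α₁ < α₂) (h2 : α₂ < 1/2) :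
    1 - α₂ * (1 - α₂) ^ 2 / (2 * α₂ ^ 3 - 4 * α₂ ^ 2 + 1)
      < 1 - α₁ * (1 - α₁) ^ 2 / (2 * α₁ ^ 3 - 4 * α₁ ^ 2 + 1) := by
  have h_mono : slowdown α₁ < slowdown α₂ :=
    slowdown_strictMonoOn ⟨h0.le, by linarith⟩ ⟨by linarith, h2.le⟩ h12
  rw [slowdown, slowdown] at h_mono
  linarith
end
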